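/- arXiv:1805.11266 — 6 statements merged into one kernel-verified Lean document; each statement's English description precedes it below -/
import Mathlib

section
/- In a generalized group G, each element a has a unique inverse: if b and c both satisfy a * b = e(a), b * a = e(a), a * c = e(a), and c * a = e(a), then b = c. -/
/-- A generalized group (Molaei): a set with an associative multiplication in which
every element `a` has a unique identity `e a` and an inverse relative to `e a`. -/
structure GeneralizedGroup (G : Type*) where
  mul : G → G → G
  e : G → G
  inv : G → G
  mul_assoc : ∀ a b c : G, mul (mul a b) c = mul a (mul b c)
  mul_e : ∀ a : G, mul a (e a) = a
  e_mul : ∀ a : G, mul (e a) a = a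
  e_unique : ∀ a x : G, mul a x = a → mul x a = a → x = e a
  mul_inv : ∀ a : G, mul a (inv a) = e a
  inv_mul : ∀ a : G, mul (inv a) a = e a

private lemma inv_absorb {G : Type*} (gg : GeneralizedGroup G) (a x : G)
    (h1 : gg.mul a x = gg.e a) (h2 : gg.mul x a = gg.e a) :
    gg.mul x (gg.e a) = x ∧ gg.mul (gg.e a) x = x := by
  have idem : gg.mul (gg.e a) (gg.e a) = gg.e a := by
    calc gg.mul (gg.e a) (gg.e a) = gg.mul (gg.e a) (gg.mul a x) := by rw [h1]
      _ = gg.mul (gg.mul (gg.e a) a) x := (gg.mul_assoc _ _ _).symm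
      _ = gg.mul a x := by rw [gg.e_mul]
      _ = gg.e a := h1
  have comm : gg.mul x (gg.e a) = gg.mul (gg.e a) x := by
    calc gg.mul x (gg.e a) = gg.mul x (gg.mul a x) := by rw [h1]
      _ = gg.mul (gg.mul x a) x := (gg.mul_assoc _ _ _).symm
      _ = gg.mul (gg.e a) x := by rw [h2]
  have h3 : gg.mul (gg.e a) (gg.e x) = gg.e a := by
    calc gg.mul (gg.e a) (gg.e x) = gg.mul (gg.mul a x) (gg.e x) := by rw [h1]
      _ = gg.mul a (gg.mul x (gg.e x)) := gg.mul_assoc _ _ _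
      _ = gg.mul a x := by rw [gg.mul_e]
      _ = gg.e a := h1
  have hex_y : gg.mul (gg.e x) (gg.mul x (gg.e a)) = gg.mul x (gg.e a) := by
    rw [← gg.mul_assoc, gg.e_mul]
  have hy_ex : gg.mul (gg.mul x (gg.e a)) (gg.e x) = gg.mul x (gg.e a) := by
    rw [gg.mul_assoc, h3]
  have hea_y : gg.mul (gg.e a) (gg.mul x (gg.e a)) = gg.mul x (gg.e a) := by
    rw [comm, ← gg.mul_assoc, idem]
  have hy_ea : gg.mul (gg.mul x (gg.e a)) (gg.e a) = gg.mul x (gg.e a) := by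
    rw [gg.mul_assoc, idem]
  have e1 : gg.e x = gg.e (gg.mul x (gg.e a)) := gg.e_unique _ _ hy_ex hex_y
  have e2 : gg.e a = gg.e (gg.mul x (gg.e a)) := gg.e_unique _ _ hy_ea hea_y
  have exa : gg.e a = gg.e x := by rw [e2, e1]
  refine ⟨?_, ?_⟩
  · rw [exa, gg.mul_e]
  · rw [exa, gg.e_mul]

/-- In a generalized group, each element has a unique inverse. -/
theorem unique_inverse {G : Type*} (gg : GeneralizedGroup G) (a b c : G)
    (hb1 : gg.mul a b = gg.e a) (hb2 : gg.mul b a = gg.e a)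
    (hc1 : gg.mul a c = gg.e a) (hc2 : gg.mul c a = gg.e a) :
    b = c := by
  have hb := inv_absorb gg a b hb1 hb2
  have hc := inv_absorb gg a c hc1 hc2
  calc b = gg.mul b (gg.e a) := hb.1.symm
    _ = gg.mul b (gg.mul a c) := by rw [hc1]
    _ = gg.mul (gg.mul b a) c := (gg.mul_assoc _ _ _).symm
    _ = gg.mul (gg.e a) c := by rw [hb2]
    _ = c := hc.2
end

section
/- If G is a generalized group in which the multiplication is commutative (a * b = b * a for all a, b ∈ G), then the identity map e is constant: e(a) = e(b) for all a, b ∈ G; consequently G is an abelian group with identity element e(a) for any a. -/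
/-- If a generalized group is commutative then `e` is constant; consequently `G` is an
abelian group with identity element `e a` for any `a`. -/
theorem comm_generalizedGroup_is_abelian_group {G : Type*} (gg : GeneralizedGroup G)
    (hcomm : ∀ a b : G, gg.mul a b = gg.mul b a) :
    (∀ a b : G, gg.e a = gg.e b) ∧
    (∀ a x : G, gg.mul (gg.e a) x = x ∧ gg.mul x (gg.e a) = x ∧
      gg.mul x (gg.inv x) = gg.e a ∧ gg.mul (gg.inv x) x = gg.e a) := by
  have key : ∀ a b : G, gg.e a = gg.e (gg.mul a b) := by
    intro a b
    apply gg.e_unique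
    · rw [hcomm, ← gg.mul_assoc, gg.e_mul]
    · rw [← gg.mul_assoc, gg.e_mul]
  have econst : ∀ a b : G, gg.e a = gg.e b := by
    intro a b
    rw [key a b, key b a, hcomm]
  refine ⟨econst, fun a x => ?_⟩
  rw [econst a x]
  exact ⟨gg.e_mul x, gg.mul_e x, gg.mul_inv x, gg.inv_mul x⟩
end

section
/- In a generalized group G, for each a ∈ G the set G_a = {x ∈ G : e(x) = e(a)} is a generalized subgroup of G: for all x, y ∈ G with e(x) = e(a) and e(y) = e(a), one has e(x * inv(y)) = e(a), i.e., x * inv(y) ∈ G_a. -/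
/-- `G_a = {x : e x = e a}` is a generalized subgroup: it is closed under `x * y⁻¹`. -/
theorem Ga_generalized_subgroup {G : Type*} (gg : GeneralizedGroup G) (a : G) :
    ∀ x y : G, gg.e x = gg.e a → gg.e y = gg.e a →
      gg.e (gg.mul x (gg.inv y)) = gg.e a := by
  have e_inv : ∀ b : G, gg.e (gg.inv b) = gg.e b := by
    intro b
    have h1 : gg.mul (gg.e (gg.inv b)) (gg.e b) = gg.e b := by
      rw [← gg.inv_mul b, ← gg.mul_assoc, gg.e_mul]
    have h2 : gg.mul (gg.e b) (gg.e (gg.inv b)) = gg.e b := by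
      rw [← gg.mul_inv b, gg.mul_assoc, gg.mul_e]
    have := gg.e_unique (gg.e b) (gg.e (gg.inv b)) h2 h1
    have heeb : gg.e (gg.e b) = gg.e b := by
      have h3 : gg.mul (gg.e b) (gg.e b) = gg.e b := by
        nth_rewrite 2 [← gg.mul_inv b]
        rw [← gg.mul_assoc, gg.e_mul, gg.mul_inv]
      exact (gg.e_unique (gg.e b) (gg.e b) h3 h3).symm
    rw [this, heeb]
  intro x y hx hy
  have h1 : gg.mul (gg.mul x (gg.inv y)) (gg.e a) = gg.mul x (gg.inv y) := by
    rw [gg.mul_assoc, ← hy, ← e_inv y, gg.mul_e]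
  have h2 : gg.mul (gg.e a) (gg.mul x (gg.inv y)) = gg.mul x (gg.inv y) := by
    rw [← gg.mul_assoc, ← hx, gg.e_mul]
  exact (gg.e_unique (gg.mul x (gg.inv y)) (gg.e a) h1 h2).symm
end

section
/- In a generalized group G, for each a ∈ G the set G_a = {x ∈ G : e(x) = e(a)} is a group: e(a) ∈ G_a; G_a is closed under multiplication (x, y ∈ G_a implies x * y ∈ G_a) and under inv (x ∈ G_a implies inv(x) ∈ G_a); e(a) is a two-sided identity on G_a (e(a) * x = x and x * e(a) = x for all x ∈ G_a); and every x ∈ G_a satisfies x * inv(x) = e(a) and inv(x) * x = e(a). -/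
namespace GeneralizedGroup

variable {G : Type*} (gg : GeneralizedGroup G)

theorem e_mul_e_self (x : G) : gg.mul (gg.e x) (gg.e x) = gg.e x := by
  calc gg.mul (gg.e x) (gg.e x) = gg.mul (gg.e x) (gg.mul x (gg.inv x)) := by rw [gg.mul_inv]
    _ = gg.e x := by rw [← gg.mul_assoc, gg.e_mul, gg.mul_inv]

theorem e_e (x : G) : gg.e (gg.e x) = gg.e x :=
  (gg.e_unique _ _ (gg.e_mul_e_self x) (gg.e_mul_e_self x)).symm

theorem e_inv (x : G) : gg.e (gg.inv x) = gg.e x := by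
  have h_right : gg.mul (gg.e x) (gg.e (gg.inv x)) = gg.e x := by
    rw [← gg.mul_inv x, gg.mul_assoc, gg.mul_e]
  have h_left : gg.mul (gg.e (gg.inv x)) (gg.e x) = gg.e x := by
    rw [← gg.inv_mul x, ← gg.mul_assoc, gg.e_mul]
  rw [gg.e_unique _ _ h_right h_left, gg.e_e]

theorem e_mul_of_e_eq {x y : G} (hxy : gg.e x = gg.e y) : gg.e (gg.mul x y) = gg.e x := by
  have h_right : gg.mul (gg.mul x y) (gg.e x) = gg.mul x y := by
    rw [gg.mul_assoc, hxy, gg.mul_e]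
  have h_left : gg.mul (gg.e x) (gg.mul x y) = gg.mul x y := by
    rw [← gg.mul_assoc, gg.e_mul]
  exact (gg.e_unique _ _ h_right h_left).symm

end GeneralizedGroup

/-- `G_a = {x : e x = e a}` is a group. -/
theorem Ga_is_group {G : Type*} (gg : GeneralizedGroup G) (a : G) :
    gg.e (gg.e a) = gg.e a ∧
    (∀ x y : G, gg.e x = gg.e a → gg.e y = gg.e a → gg.e (gg.mul x y) = gg.e a) ∧
    (∀ x : G, gg.e x = gg.e a → gg.e (gg.inv x) = gg.e a) ∧
    (∀ x : G, gg.e x = gg.e a → gg.mul (gg.e a) x = x ∧ gg.mul x (gg.e a) = x) ∧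
    (∀ x : G, gg.e x = gg.e a →
      gg.mul x (gg.inv x) = gg.e a ∧ gg.mul (gg.inv x) x = gg.e a) := by
  refine ⟨gg.e_e a, ?_, ?_, ?_, ?_⟩
  · intro x y hx hy
    rw [gg.e_mul_of_e_eq (hx.trans hy.symm), hx]
  · intro x hx
    rw [gg.e_inv, hx]
  · intro x hx
    exact ⟨by rw [← hx, gg.e_mul], by rw [← hx, gg.mul_e]⟩
  · intro x hx
    exact ⟨by rw [gg.mul_inv, hx], by rw [gg.inv_mul, hx]⟩
end

section
/- Let G be a topological generalized group and a ∈ G. Then G_a = {x ∈ G : e(x) = e(a)}, with the subspace topology, is a topological group: G_a is closed under multiplication and under inv, e(a) ∈ G_a is a two-sided identity on G_a, every x ∈ G_a satisfies x * inv(x) = inv(x) * x = e(a), and the corestricted maps G_a × G_a → G_a, (x,y) ↦ x*y, and G_a → G_a, x ↦ inv(x), are continuous. -/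
lemma GeneralizedGroup.e_mul_e {G : Type*} (gg : GeneralizedGroup G) (a : G) :
    gg.mul (gg.e a) (gg.e a) = gg.e a := by
  calc gg.mul (gg.e a) (gg.e a) = gg.mul (gg.e a) (gg.mul a (gg.inv a)) := by
        rw [gg.mul_inv]
    _ = gg.mul (gg.mul (gg.e a) a) (gg.inv a) := (gg.mul_assoc _ _ _).symm
    _ = gg.e a := by rw [gg.e_mul, gg.mul_inv]

lemma GeneralizedGroup.e_e_s11 {G : Type*} (gg : GeneralizedGroup G) (a : G) :
    gg.e (gg.e a) = gg.e a :=
  (gg.e_unique (gg.e a) (gg.e a) (gg.e_mul_e a) (gg.e_mul_e a)).symm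

lemma GeneralizedGroup.e_inv_s11 {G : Type*} (gg : GeneralizedGroup G) (a : G) :
    gg.e (gg.inv a) = gg.e a := by
  have h1 : gg.mul (gg.e a) (gg.e (gg.inv a)) = gg.e a := by
    rw [← gg.mul_inv a, gg.mul_assoc, gg.mul_e]
  have h2 : gg.mul (gg.e (gg.inv a)) (gg.e a) = gg.e a := by
    rw [← gg.inv_mul a, ← gg.mul_assoc, gg.e_mul]
  have := gg.e_unique (gg.e a) (gg.e (gg.inv a)) h1 h2
  rw [this, gg.e_e_s11]

lemma GeneralizedGroup.e_mul_mem {G : Type*} (gg : GeneralizedGroup G) (a x y : G)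
    (hx : gg.e x = gg.e a) (hy : gg.e y = gg.e a) :
    gg.e (gg.mul x y) = gg.e a := by
  have h1 : gg.mul (gg.mul x y) (gg.e a) = gg.mul x y := by
    rw [gg.mul_assoc, ← hy, gg.mul_e]
  have h2 : gg.mul (gg.e a) (gg.mul x y) = gg.mul x y := by
    rw [← gg.mul_assoc, ← hx, gg.e_mul]
  exact (gg.e_unique (gg.mul x y) (gg.e a) h1 h2).symm

/-- In a topological generalized group, `G_a = {x : e x = e a}` with the subspace
topology is a topological group. -/
theorem Ga_topologicalGroup {G : Type*} [TopologicalSpace G] [T2Space G]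
    (gg : GeneralizedGroup G)
    (hmul_cont : Continuous fun p : G × G => gg.mul p.1 p.2)
    (hinv_cont : Continuous gg.inv) (a : G) :
    (∀ x y : G, gg.e x = gg.e a → gg.e y = gg.e a → gg.e (gg.mul x y) = gg.e a) ∧
    (∀ x : G, gg.e x = gg.e a → gg.e (gg.inv x) = gg.e a) ∧
    gg.e (gg.e a) = gg.e a ∧
    (∀ x : G, gg.e x = gg.e a → gg.mul (gg.e a) x = x ∧ gg.mul x (gg.e a) = x) ∧
    (∀ x : G, gg.e x = gg.e a →
      gg.mul x (gg.inv x) = gg.e a ∧ gg.mul (gg.inv x) x = gg.e a) ∧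
    (∃ hm : ∀ x y : {x : G // gg.e x = gg.e a}, gg.e (gg.mul x.1 y.1) = gg.e a,
      Continuous fun p : {x : G // gg.e x = gg.e a} × {x : G // gg.e x = gg.e a} =>
        (⟨gg.mul p.1.1 p.2.1, hm p.1 p.2⟩ : {x : G // gg.e x = gg.e a})) ∧
    (∃ hi : ∀ x : {x : G // gg.e x = gg.e a}, gg.e (gg.inv x.1) = gg.e a,
      Continuous fun x : {x : G // gg.e x = gg.e a} =>
        (⟨gg.inv x.1, hi x⟩ : {x : G // gg.e x = gg.e a})) := by
  refine ⟨fun x y hx hy => gg.e_mul_mem a x y hx hy,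
    fun x hx => by rw [gg.e_inv_s11, hx],
    gg.e_e_s11 a,
    fun x hx => ⟨by rw [← hx, gg.e_mul], by rw [← hx, gg.mul_e]⟩,
    fun x hx => ⟨by rw [gg.mul_inv, hx], by rw [gg.inv_mul, hx]⟩,
    ⟨fun x y => gg.e_mul_mem a x.1 y.1 x.2 y.2, ?_⟩,
    ⟨fun x => by rw [gg.e_inv_s11, x.2], ?_⟩⟩
  · exact Continuous.subtype_mk
      (hmul_cont.comp ((continuous_subtype_val.comp continuous_fst).prodMk
        (continuous_subtype_val.comp continuous_snd))) _
  · exact Continuous.subtype_mk (hinv_cont.comp continuous_subtype_val) _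
end

section
/- Let ι be a nonempty finite type, X a topological space, and for each i ∈ ι let π_i : S_i → X be a local homeomorphism. Then the projection π : S* → X of the Whitney sum, π(σ) = π_{i₀}(σ_{i₀}) for a fixed i₀ ∈ ι, is a local homeomorphism; hence the Whitney sum (S*, π) is a sheaf over X. -/
/-!
The Whitney sum is the pullback of the product map `Π i, S i → Π i, X` along the diagonal of
`X`. Finite products of local homeomorphisms are local homeomorphisms, and local
homeomorphisms are stable under restriction to preimages, because they are exactly the
continuous, open, locally injective maps and each of these properties survives restriction.
-/

open Topology

section RestrictPreimage

variable {X Y : Type*} [TopologicalSpace X] {f : X → Y}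

theorem IsLocalHomeomorph.of_continuous_isOpenMap_isLocallyInjective [TopologicalSpace Y]
    (hc : Continuous f) (ho : IsOpenMap f) (hi : IsLocallyInjective f) : IsLocalHomeomorph f := by
  refine isLocalHomeomorph_iff_isOpenEmbedding_restrict.mpr fun x => ?_
  obtain ⟨U, hU, hxU, hinj⟩ := hi x
  exact ⟨U, hU.mem_nhds hxU, .of_continuous_injective_isOpenMap (hc.comp continuous_subtype_val)
    (Set.injOn_iff_injective.mp hinj) (ho.domRestrict hU)⟩

theorem IsLocallyInjective.restrictPreimage (hf : IsLocallyInjective f) (s : Set Y) :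
    IsLocallyInjective (s.restrictPreimage f) := fun x => by
  obtain ⟨U, hU, hxU, hinj⟩ := hf x
  exact ⟨Subtype.val ⁻¹' U, hU.preimage continuous_subtype_val, hxU,
    fun a ha b hb hab => Subtype.ext (hinj ha hb (congrArg Subtype.val hab))⟩

theorem IsLocalHomeomorph.restrictPreimage [TopologicalSpace Y] (hf : IsLocalHomeomorph f)
    (s : Set Y) :
    IsLocalHomeomorph (s.restrictPreimage f) :=
  .of_continuous_isOpenMap_isLocallyInjective hf.continuous.restrictPreimage
    (hf.isOpenMap.restrictPreimage s) (hf.isLocallyInjective.restrictPreimage s)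

end RestrictPreimage

theorem IsLocalHomeomorph.piMap {ι : Type*} [Finite ι] {X Y : ι → Type*}
    [∀ i, TopologicalSpace (X i)] [∀ i, TopologicalSpace (Y i)] {f : ∀ i, X i → Y i}
    (hf : ∀ i, IsLocalHomeomorph (f i)) : IsLocalHomeomorph (Pi.map f) := by
  refine .mk _ fun x => ?_
  choose e hxe hfe using fun i => hf i (x i)
  exact ⟨.pi e, fun i _ => hxe i, fun y _ => funext fun i => congrFun (hfe i) (y i)⟩

def Homeomorph.constFamilies {ι X : Type*} [TopologicalSpace X] (i₀ : ι) :
    {x : ι → X // ∀ i j, x i = x j} ≃ₜ X where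
  toFun x := x.1 i₀
  invFun a := ⟨fun _ => a, fun _ _ => rfl⟩
  left_inv x := Subtype.ext (funext fun i => x.2 i₀ i)
  right_inv _ := rfl
  continuous_toFun := (continuous_apply i₀).comp continuous_subtype_val
  continuous_invFun := by fun_prop

theorem whitneySum_isLocalHomeomorph_general {ι : Type*} [Finite ι]
    {X : Type*} [TopologicalSpace X] {S : ι → Type*} [∀ i, TopologicalSpace (S i)]
    (π : ∀ i, S i → X) (hπ : ∀ i, IsLocalHomeomorph (π i)) (i₀ : ι) :
    IsLocalHomeomorph
      (fun σ : {σ : ∀ i, S i // ∀ i j, π i (σ i) = π j (σ j)} =>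
        π i₀ (σ.1 i₀)) :=
  (Homeomorph.constFamilies i₀).isLocalHomeomorph.comp
    ((IsLocalHomeomorph.piMap hπ).restrictPreimage {x : ι → X | ∀ i j, x i = x j})

/-- The projection of the Whitney sum of sheaves (local homeomorphisms) over `X` is a
local homeomorphism, hence the Whitney sum is a sheaf over `X`. -/
theorem whitneySum_isLocalHomeomorph {ι : Type*} [Finite ι] [Nonempty ι]
    {X : Type*} [TopologicalSpace X] {S : ι → Type*} [∀ i, TopologicalSpace (S i)]
    (π : ∀ i, S i → X) (hπ : ∀ i, IsLocalHomeomorph (π i)) (i₀ : ι) :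
    IsLocalHomeomorph
      (fun σ : {σ : ∀ i, S i // ∀ i j, π i (σ i) = π j (σ j)} =>
        π i₀ (σ.1 i₀)) :=
  whitneySum_isLocalHomeomorph_general π hπ i₀
end
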